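/- arXiv:2107.04368 — 3 statements merged into one kernel-verified Lean document; each statement's English description precedes it below -/
import Mathlib

section
/- Let G=(W,E) be a simple undirected graph with W={w_1,…,w_{3q}} and let (N,V) be the instance of 3D-SR-AS-BIN constructed from G by the reduction. If (N,V) contains a stable matching M with |M| = |N|/3, then G has a partition into triangles. -/
open Finset

variable {A : Type*}

/-- `M` is a matching on agent set `N`: a set of pairwise disjoint triples of agents of `N`. -/
def IsMatching [DecidableEq A] (N : Finset A) (M : Finset (Finset A)) : Prop :=
  (∀ t ∈ M, t.card = 3 ∧ t ⊆ N) ∧ ∀ t ∈ M, ∀ s ∈ M, t ≠ s → Disjoint t s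

/-- The (additively separable) utility of agent `a` in matching `M` under valuations `val`:
the sum, over the triples of `M` containing `a`, of the valuations by `a` of the other
members; this is `0` if `a` is unmatched, and for a genuine matching it is the sum of the
valuations of `a`'s two partners. -/
def utility [DecidableEq A] (val : A → A → ℤ) (M : Finset (Finset A)) (a : A) : ℤ :=
  ∑ t ∈ M.filter (fun t => a ∈ t), ∑ b ∈ t.erase a, val a b

/-- The triple consisting of the three distinct agents `x, y, z` of `N` blocks `M`. -/
def Blocks [DecidableEq A] (N : Finset A) (val : A → A → ℤ) (M : Finset (Finset A))
    (x y z : A) : Prop :=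
  x ∈ N ∧ y ∈ N ∧ z ∈ N ∧ x ≠ y ∧ x ≠ z ∧ y ≠ z ∧
  utility val M x < val x y + val x z ∧
  utility val M y < val y x + val y z ∧
  utility val M z < val z x + val z y

/-- `M` is stable: no triple of agents of `N` blocks it. -/
def IsStable [DecidableEq A] (N : Finset A) (val : A → A → ℤ) (M : Finset (Finset A)) : Prop :=
  ∀ x y z : A, ¬ Blocks N val M x y z

/-- Binary symmetric preferences on `N`. -/
def BinSym [DecidableEq A] (N : Finset A) (val : A → A → ℤ) : Prop :=
  (∀ a ∈ N, ∀ b ∈ N, a ≠ b → val a b = 0 ∨ val a b = 1) ∧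
  (∀ a ∈ N, ∀ b ∈ N, val a b = val b a)

/-- A `P`-matching: a matching in which every matched agent has strictly positive utility. -/
def IsPMatching [DecidableEq A] (N : Finset A) (val : A → A → ℤ)
    (M : Finset (Finset A)) : Prop :=
  IsMatching N M ∧ ∀ a : A, (∃ t ∈ M, a ∈ t) → 0 < utility val M a

/-- `x, y, z` form a triangle: three distinct agents of `N` whose pairwise valuations
all equal `1`. -/
def IsTriangle [DecidableEq A] (N : Finset A) (val : A → A → ℤ) (x y z : A) : Prop :=
  x ∈ N ∧ y ∈ N ∧ z ∈ N ∧ x ≠ y ∧ x ≠ z ∧ y ≠ z ∧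
  val x y = 1 ∧ val y z = 1 ∧ val x z = 1

/-- The instance contains no triangle. -/
def TriangleFree [DecidableEq A] (N : Finset A) (val : A → A → ℤ) : Prop :=
  ∀ x y z : A, ¬ IsTriangle N val x y z

open Finset

/-- The agents of the instance constructed by the reduction from
Partition Into Triangles: `a i s` (for `s : Fin 2`), `b i` for each vertex `i`,
and pentagadget agents `p r t` (`t : Fin 5`, representing `p_r^{t+1}`). -/
inductive Agent (q : ℕ) : Type where
  | a : Fin (3*q) → Fin 2 → Agent q
  | b : Fin (3*q) → Agent q
  | p : Fin (6*q) → Fin 5 → Agent q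
  deriving DecidableEq, Fintype

/-- The valuation function of the instance constructed by the reduction from the graph `G`.
Note that, within a pentagadget, `p_r^t` assigns valuation `1` exactly to
`p_r^{t+1}, p_r^{t+2}, p_r^{t+4}` (indices mod 5). -/
def redVal (q : ℕ) (G : SimpleGraph (Fin (3*q))) [DecidableRel G.Adj] :
    Agent q → Agent q → ℤ
  | .a i s, .a j s' => if i = j ∧ s ≠ s' then 1 else 0
  | .a i _, .b j => if i = j then 1 else 0
  | .b i, .a j _ => if i = j then 1 else 0
  | .b i, .b j => if G.Adj i j then 1 else 0
  | .p r t, .p r' t' => if r = r' ∧ (t' - t = 1 ∨ t' - t = 2 ∨ t' - t = 4) then 1 else 0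
  | _, _ => 0

/-- A partition of the vertices of `G` into triangles. -/
def IsTrianglePartition {n : ℕ} (G : SimpleGraph (Fin n))
    (X : Finset (Finset (Fin n))) : Prop :=
  (∀ t ∈ X, t.card = 3 ∧ ∀ u ∈ t, ∀ v ∈ t, u ≠ v → G.Adj u v) ∧
  (∀ t ∈ X, ∀ s ∈ X, t ≠ s → Disjoint t s) ∧
  ∀ v : Fin n, ∃ t ∈ X, v ∈ t


/-! Since the `13 q` triples of `M` cover all `39 q` agents, every agent is matched. In a
pentagadget `p^t` values exactly `p^(t+1), p^(t+2), p^(t+4)` (indices mod 5), and if `p^(s+2)` and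
`p^(s+3)` have utility at most one, then `p^(s+4)` needs positive utility, or
`{p^(s+2), p^(s+3), p^(s+4)}` blocks. This forces every gadget to contain a triple of `M`: otherwise
each gadget agent would have exactly one partner inside the gadget, and five is odd. That
triple must be `{p^s, p^(s+1), p^(s+2)}`, and `p^(s+3), p^(s+4)` must share the triple of an
agent outside every gadget. That agent is no `b_i`, since `b_i` would then have utility zero and
block with `a_i^1, a_i^2`. So the `6 q` gadgets use up all `6 q` agents `a_i^j`, and then
`{a_i^1, a_i^2, b_i}` blocks unless `b_i` has utility two, i.e. shares its triple with `b_j, b_k`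
for two neighbours `w_j, w_k` of `w_i`. The triples of `b`-agents therefore partition `G` into
triangles. -/

lemma Finset.exists_eq_insert_insert_of_card_eq_three [DecidableEq A] {T : Finset A} {x y : A}
    (hT : T.card = 3) (hx : x ∈ T) (hy : y ∈ T) (hxy : x ≠ y) :
    ∃ z, z ≠ x ∧ z ≠ y ∧ T = {x, y, z} := by
  have hy' : y ∈ T.erase x := mem_erase.2 ⟨hxy.symm, hy⟩
  obtain ⟨z, hz⟩ : ∃ z, (T.erase x).erase y = {z} := card_eq_one.1 <| by
    rw [card_erase_of_mem hy', card_erase_of_mem hx, hT]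
  have hz' : z ∈ (T.erase x).erase y := hz ▸ mem_singleton_self z
  refine ⟨z, ne_of_mem_erase (mem_of_mem_erase hz'), ne_of_mem_erase hz', ?_⟩
  rw [← hz, insert_erase hy', insert_erase hx]

namespace IsMatching

variable [DecidableEq A] {N : Finset A} {M : Finset (Finset A)} {T T' : Finset A} {x y z : A}

lemma card_eq_three (hM : IsMatching N M) (hT : T ∈ M) : T.card = 3 := (hM.1 T hT).1

lemma eq_of_mem (hM : IsMatching N M) (hT : T ∈ M) (hT' : T' ∈ M) (hx : x ∈ T) (hx' : x ∈ T') :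
    T = T' := by
  by_contra h
  exact disjoint_left.mp (hM.2 T hT T' hT' h) hx hx'

lemma notMem_of_mem_of_notMem (hM : IsMatching N M) (hT : T ∈ M) (hT' : T' ∈ M) (hx : x ∈ T)
    (hx' : x ∉ T') (hy : y ∈ T) : y ∉ T' :=
  fun hy' => hx' (hM.eq_of_mem hT hT' hy hy' ▸ hx)

lemma filter_mem_eq_singleton (hM : IsMatching N M) (hT : T ∈ M) (hx : x ∈ T) :
    M.filter (x ∈ ·) = {T} := by
  ext T'
  simp only [mem_filter, mem_singleton]
  exact ⟨fun h => hM.eq_of_mem h.1 hT h.2 hx, by rintro rfl; exact ⟨hT, hx⟩⟩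

lemma exists_mem_of_card_eq [Fintype A] (hM : IsMatching univ M)
    (hcard : 3 * M.card = Fintype.card A) (x : A) : ∃ T ∈ M, x ∈ T := by
  have hunion : (M.biUnion fun T => T) = univ := by
    refine eq_univ_of_card _ ?_
    rw [card_biUnion fun T hT T' hT' h => hM.2 T hT T' hT' h, ← hcard, mul_comm]
    exact sum_const_nat fun T hT => hM.card_eq_three hT
  have hx : x ∈ M.biUnion fun T => T := hunion ▸ mem_univ x
  simpa using hx

lemma sum_card_inter (hM : IsMatching N M) {S : Finset A} (hcover : ∀ x ∈ S, ∃ T ∈ M, x ∈ T) :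
    ∑ T ∈ M, (S ∩ T).card = S.card := by
  refine (Finset.sum_card_inter fun x hx => ?_).trans (mul_one _)
  obtain ⟨T, hT, hx⟩ := hcover x hx
  rw [hM.filter_mem_eq_singleton hT hx, card_singleton]

variable {val : A → A → ℤ}

lemma utility_eq_sum (hM : IsMatching N M) (hT : T ∈ M) (hx : x ∈ T) :
    utility val M x = ∑ y ∈ T.erase x, val x y := by
  rw [utility, hM.filter_mem_eq_singleton hT hx, sum_singleton]

lemma utility_eq_add (hM : IsMatching N M) (hT : {x, y, z} ∈ M) (hxy : x ≠ y) (hxz : x ≠ z)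
    (hyz : y ≠ z) : utility val M x = val x y + val x z := by
  rw [hM.utility_eq_sum hT (mem_insert_self _ _), erase_insert (by simp [hxy, hxz]),
    sum_pair hyz]

lemma utility_nonpos (hM : IsMatching N M) (hT : T ∈ M) (hx : x ∈ T)
    (h : ∀ y ∈ T, y ≠ x → val x y ≤ 0) : utility val M x ≤ 0 := by
  rw [hM.utility_eq_sum hT hx]
  exact sum_nonpos fun y hy => h y (mem_of_mem_erase hy) (ne_of_mem_erase hy)

lemma exists_val_pos_of_utility_pos (hM : IsMatching N M) (hT : T ∈ M) (hx : x ∈ T)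
    (h : 0 < utility val M x) : ∃ y ∈ T, y ≠ x ∧ 0 < val x y := by
  by_contra! h'
  exact (hM.utility_nonpos hT hx h').not_gt h

lemma val_pos_of_one_lt_utility (hM : IsMatching N M) (hT : T ∈ M) (hx : x ∈ T)
    (hle : ∀ y, val x y ≤ 1) (h : 1 < utility val M x) (hy : y ∈ T) (hyx : y ≠ x) :
    0 < val x y := by
  obtain ⟨z, hzx, hzy, rfl⟩ :=
    Finset.exists_eq_insert_insert_of_card_eq_three (hM.card_eq_three hT) hx hy hyx.symm
  rw [hM.utility_eq_add hT hyx.symm hzx.symm hzy.symm] at h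
  linarith [hle z]

lemma utility_le_one (hM : IsMatching N M) (hT : T ∈ M) (hx : x ∈ T) (hle : ∀ y, val x y ≤ 1)
    (h : ∀ y ∈ T, y ≠ x → 0 < val x y → y = z) : utility val M x ≤ 1 := by
  by_contra! h1
  have hsub : T.erase x ⊆ {z} := fun y hy => mem_singleton.2 <|
    h y (mem_of_mem_erase hy) (ne_of_mem_erase hy)
      (hM.val_pos_of_one_lt_utility hT hx hle h1 (mem_of_mem_erase hy) (ne_of_mem_erase hy))
  have := card_le_card hsub
  rw [card_erase_of_mem hx, hM.card_eq_three hT, card_singleton] at this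
  omega

end IsMatching

lemma IsStable.le_utility [Fintype A] [DecidableEq A] {val : A → A → ℤ} {M : Finset (Finset A)}
    (hst : IsStable univ val M) {x y z : A} (hxy : x ≠ y) (hxz : x ≠ z) (hyz : y ≠ z)
    (hy : utility val M y < val y x + val y z) (hz : utility val M z < val z x + val z y) :
    val x y + val x z ≤ utility val M x := by
  by_contra! hx
  exact hst x y z ⟨mem_univ x, mem_univ y, mem_univ z, hxy, hxz, hyz, hx, hy, hz⟩

lemma IsMatching.exists_trianglePartition {B : Type*} [DecidableEq B] {N : Finset B}
    {M : Finset (Finset B)} (hM : IsMatching N M) {n : ℕ} {G : SimpleGraph (Fin n)}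
    {f : Fin n → B} (hf : Function.Injective f) (hcover : ∀ i, ∃ T ∈ M, f i ∈ T)
    (hadj : ∀ T ∈ M, ∀ i, f i ∈ T → ∀ x ∈ T, x ≠ f i → ∃ j, x = f j ∧ G.Adj i j) :
    ∃ X, IsTrianglePartition G X := by
  let V (T : Finset B) : Finset (Fin n) := T.preimage f hf.injOn
  have hV (T : Finset B) (hT : T ∈ M) (i : Fin n) (hi : f i ∈ T) : (V T).image f = T := by
    ext x
    simp only [V, mem_image, mem_preimage]
    refine ⟨by rintro ⟨j, hj, rfl⟩; exact hj, fun hx => ?_⟩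
    obtain rfl | hxi := eq_or_ne x (f i)
    · exact ⟨i, hi, rfl⟩
    · obtain ⟨j, rfl, -⟩ := hadj T hT i hi x hx hxi
      exact ⟨j, hx, rfl⟩
  refine ⟨(M.filter fun T => ∃ i, f i ∈ T).image V, ?_, ?_, fun i => ?_⟩
  · simp only [mem_image, mem_filter]
    rintro _ ⟨T, ⟨hT, i, hi⟩, rfl⟩
    refine ⟨?_, fun u hu v hv huv => ?_⟩
    · rw [← card_image_of_injective _ hf, hV T hT i hi, hM.card_eq_three hT]
    · simp only [V, mem_preimage] at hu hv
      obtain ⟨j, hj, hij⟩ := hadj T hT u hu (f v) hv (hf.ne huv.symm)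
      rwa [← hf hj] at hij
  · simp only [mem_image, mem_filter]
    rintro _ ⟨T, ⟨hT, -⟩, rfl⟩ _ ⟨T', ⟨hT', -⟩, rfl⟩ hne
    refine disjoint_left.2 fun j hj hj' => hne ?_
    simp only [V, mem_preimage] at hj hj'
    rw [hM.eq_of_mem hT hT' hj hj']
  · obtain ⟨T, hT, hi⟩ := hcover i
    exact ⟨V T, mem_image_of_mem _ (mem_filter.2 ⟨hT, i, hi⟩), by simpa [V] using hi⟩

namespace Agent

variable {q : ℕ}

def equivSum (q : ℕ) : Agent q ≃ (Fin (3 * q) × Fin 2) ⊕ Fin (3 * q) ⊕ (Fin (6 * q) × Fin 5) where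
  toFun
    | a i s => .inl (i, s)
    | b i => .inr (.inl i)
    | p r t => .inr (.inr (r, t))
  invFun
    | .inl (i, s) => a i s
    | .inr (.inl i) => b i
    | .inr (.inr (r, t)) => p r t
  left_inv x := by cases x <;> rfl
  right_inv x := by rcases x with ⟨i, s⟩ | i | ⟨r, t⟩ <;> rfl

lemma card_eq (q : ℕ) : Fintype.card (Agent q) = 39 * q := by
  simp [Fintype.card_congr (equivSum q)]
  ring

lemma b_injective : Function.Injective (b : Fin (3 * q) → Agent q) := fun _ _ h => by injection h

lemma p_injective (r : Fin (6 * q)) : Function.Injective (p r) := fun _ _ h => by injection h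

def gadget (r : Fin (6 * q)) : Finset (Agent q) := univ.image (p r)

lemma mem_gadget {r : Fin (6 * q)} {x : Agent q} : x ∈ gadget r ↔ ∃ t, p r t = x := by
  simp [gadget]

lemma card_gadget (r : Fin (6 * q)) : (gadget r).card = 5 := by
  simp [gadget, card_image_of_injective _ (p_injective r)]

end Agent

open Agent

section Reduction

variable {q : ℕ} {G : SimpleGraph (Fin (3 * q))} [DecidableRel G.Adj]

lemma redVal_le_one (x y : Agent q) : redVal q G x y ≤ 1 := by
  unfold redVal; split <;> (try split_ifs) <;> norm_num

lemma eq_of_redVal_p_pos {r : Fin (6 * q)} {t : Fin 5} {y : Agent q}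
    (h : 0 < redVal q G (p r t) y) : y = p r (t + 1) ∨ y = p r (t + 2) ∨ y = p r (t + 4) := by
  cases y with
  | p r' t' =>
    simp only [redVal] at h
    split_ifs at h with hc
    · obtain ⟨rfl, hc⟩ := hc
      grind
    · norm_num at h
  | _ => simp [redVal] at h

lemma mem_of_redVal_a_pos {i : Fin (3 * q)} {s : Fin 2} {y : Agent q}
    (h : 0 < redVal q G (a i s) y) : y ∈ ({a i 0, a i 1, b i} : Finset (Agent q)) := by
  cases y with
  | p => simp [redVal] at h
  | _ => simp only [redVal] at h; split_ifs at h with hc <;> grind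

lemma eq_of_redVal_b_pos {i : Fin (3 * q)} {y : Agent q} (h : 0 < redVal q G (b i) y) :
    (∃ s, y = a i s) ∨ ∃ j, G.Adj i j ∧ y = b j := by
  cases y with
  | a j s =>
    simp only [redVal] at h
    split_ifs at h with hc
    · exact .inl ⟨s, hc ▸ rfl⟩
    · norm_num at h
  | b j =>
    simp only [redVal] at h
    split_ifs at h with hc
    · exact .inr ⟨j, hc, rfl⟩
    · norm_num at h
  | p => simp [redVal] at h

variable {M : Finset (Finset (Agent q))}

lemma utility_p_add_four_pos (hst : IsStable univ (redVal q G) M) (r : Fin (6 * q)) (s : Fin 5)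
    (h₂ : utility (redVal q G) M (p r (s + 2)) ≤ 1)
    (h₃ : utility (redVal q G) M (p r (s + 3)) ≤ 1) :
    0 < utility (redVal q G) M (p r (s + 4)) := by
  have := hst.le_utility (x := p r (s + 4)) (y := p r (s + 2)) (z := p r (s + 3))
    (by grind) (by grind) (by grind) (by grind [redVal]) (by grind [redVal])
  grind [redVal]

lemma exists_subset_gadget (hM : IsMatching univ M) (hcover : ∀ x, ∃ T ∈ M, x ∈ T)
    (hst : IsStable univ (redVal q G) M) (r : Fin (6 * q)) : ∃ T ∈ M, T ⊆ gadget r := by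
  by_contra! hout
  have hle (t : Fin 5) : utility (redVal q G) M (p r t) ≤ 1 := by
    obtain ⟨T, hT, ht⟩ := hcover (p r t)
    by_contra! h1
    refine hout T hT fun y hy => mem_gadget.2 ?_
    obtain rfl | hne := eq_or_ne y (p r t)
    · exact ⟨t, rfl⟩
    · rcases eq_of_redVal_p_pos (hM.val_pos_of_one_lt_utility hT ht (redVal_le_one _) h1 hy hne)
        with rfl | rfl | rfl <;> exact ⟨_, rfl⟩
  have hpos (t : Fin 5) : 0 < utility (redVal q G) M (p r t) := by
    simpa using utility_p_add_four_pos hst r (t - 4) (hle _) (hle _)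
  have heven (T : Finset (Agent q)) (hT : T ∈ M) : Even (gadget r ∩ T).card := by
    obtain h0 | ⟨x, hx⟩ := (gadget r ∩ T).eq_empty_or_nonempty
    · simp [h0]
    obtain ⟨hxg, hxT⟩ := mem_inter.1 hx
    obtain ⟨t, rfl⟩ := mem_gadget.1 hxg
    obtain ⟨y, hyT, hyx, hy⟩ := hM.exists_val_pos_of_utility_pos hT hxT (hpos t)
    have hyg : y ∈ gadget r := by
      rcases eq_of_redVal_p_pos hy with rfl | rfl | rfl <;> exact mem_gadget.2 ⟨_, rfl⟩
    have h2 : 2 ≤ (gadget r ∩ T).card := by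
      have := card_le_card (show {p r t, y} ⊆ gadget r ∩ T by grind)
      rwa [card_pair hyx.symm] at this
    have h3 : (gadget r ∩ T).card < 3 := by
      rw [← hM.card_eq_three hT]
      exact card_lt_card ⟨inter_subset_right, fun h => hout T hT (h.trans inter_subset_left)⟩
    rw [show (gadget r ∩ T).card = 2 by omega]
    exact even_two
  have hsum := hM.sum_card_inter (S := gadget r) fun x _ => hcover x
  rw [card_gadget] at hsum
  exact (by decide : ¬ Even 5) (hsum ▸ even_sum _ heven)

lemma exists_eq_of_subset_gadget {r : Fin (6 * q)} {T : Finset (Agent q)} (hT : T ⊆ gadget r)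
    (h3 : T.card = 3) :
    ∃ s, T = {p r s, p r (s + 1), p r (s + 2)} ∨ T = {p r s, p r (s + 1), p r (s + 3)} := by
  obtain ⟨S, -, rfl⟩ := subset_image_iff.1 hT
  rw [card_image_of_injective _ (p_injective r)] at h3
  obtain ⟨s, hS⟩ := (by decide : ∀ S : Finset (Fin 5), S.card = 3 →
    ∃ s, S = {s, s + 1, s + 2} ∨ S = {s, s + 1, s + 3}) S h3
  exact ⟨s, by rcases hS with rfl | rfl <;> simp [image_insert]⟩
lemma gap_triple_notMem (hM : IsMatching univ M) (hcover : ∀ x, ∃ T ∈ M, x ∈ T)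
    (hst : IsStable univ (redVal q G) M) (r : Fin (6 * q)) (s : Fin 5) :
    ({p r s, p r (s + 1), p r (s + 3)} : Finset (Agent q)) ∉ M := by
  intro hI
  obtain ⟨T₂, hT₂, h₂⟩ := hcover (p r (s + 2))
  obtain ⟨T₄, hT₄, h₄⟩ := hcover (p r (s + 4))
  have hI₂ : ∀ y ∈ T₂, y ∉ ({p r s, p r (s + 1), p r (s + 3)} : Finset (Agent q)) :=
    fun y => hM.notMem_of_mem_of_notMem hT₂ hI h₂ (by simp)
  have hI₄ : ∀ y ∈ T₄, y ∉ ({p r s, p r (s + 1), p r (s + 3)} : Finset (Agent q)) :=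
    fun y => hM.notMem_of_mem_of_notMem hT₄ hI h₄ (by simp)
  have u₂ : utility (redVal q G) M (p r (s + 2)) ≤ 1 :=
    hM.utility_le_one (z := p r (s + 4)) hT₂ h₂ (redVal_le_one _) fun y hy _ hpos => by
      have := hI₂ y hy
      rcases eq_of_redVal_p_pos hpos with rfl | rfl | rfl
        <;> simp only [mem_insert, mem_singleton, p.injEq, true_and, not_or] at this ⊢ <;> grind
  have u₃ : utility (redVal q G) M (p r (s + 3)) ≤ 1 :=
    hM.utility_le_one (z := p r s) hI (by simp) (redVal_le_one _) fun y hy hne hpos => by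
      simp only [mem_insert, mem_singleton] at hy
      rcases eq_of_redVal_p_pos hpos with rfl | rfl | rfl
        <;> simp only [p.injEq, true_and, ne_eq] at hy hne ⊢ <;> grind
  have u₄ : utility (redVal q G) M (p r (s + 4)) ≤ 0 :=
    hM.utility_nonpos hT₄ h₄ fun y hy _ => by
      by_contra! hpos
      have := hI₄ y hy
      rcases eq_of_redVal_p_pos hpos with rfl | rfl | rfl
        <;> simp only [mem_insert, mem_singleton, p.injEq, true_and, not_or] at this <;> grind
  linarith [utility_p_add_four_pos hst r s u₂ u₃]

lemma exists_mem_mem_of_consecutive_mem (hM : IsMatching univ M) (hcover : ∀ x, ∃ T ∈ M, x ∈ T)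
    (hst : IsStable univ (redVal q G) M) {r : Fin (6 * q)} {s : Fin 5}
    (hI : ({p r s, p r (s + 1), p r (s + 2)} : Finset (Agent q)) ∈ M) :
    ∃ T ∈ M, p r (s + 3) ∈ T ∧ p r (s + 4) ∈ T := by
  obtain ⟨T₄, hT₄, h₄⟩ := hcover (p r (s + 4))
  refine ⟨T₄, hT₄, ?_, h₄⟩
  by_contra h₃₄
  obtain ⟨T₃, hT₃, h₃⟩ := hcover (p r (s + 3))
  have hI₃ : ∀ y ∈ T₃, y ∉ ({p r s, p r (s + 1), p r (s + 2)} : Finset (Agent q)) :=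
    fun y => hM.notMem_of_mem_of_notMem hT₃ hI h₃ (by simp)
  have hI₄ : ∀ y ∈ T₄, y ∉ ({p r s, p r (s + 1), p r (s + 2)} : Finset (Agent q)) :=
    fun y => hM.notMem_of_mem_of_notMem hT₄ hI h₄ (by simp)
  have u₂ : utility (redVal q G) M (p r (s + 2)) ≤ 1 :=
    hM.utility_le_one (z := p r (s + 1)) hI (by simp) (redVal_le_one _) fun y hy hne hpos => by
      simp only [mem_insert, mem_singleton] at hy
      rcases eq_of_redVal_p_pos hpos with rfl | rfl | rfl
        <;> simp only [p.injEq, true_and, ne_eq] at hy hne ⊢ <;> grind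
  have u₃ : utility (redVal q G) M (p r (s + 3)) ≤ 1 :=
    hM.utility_le_one (z := p r (s + 4)) hT₃ h₃ (redVal_le_one _) fun y hy _ hpos => by
      have := hI₃ y hy
      rcases eq_of_redVal_p_pos hpos with rfl | rfl | rfl
        <;> simp only [mem_insert, mem_singleton, p.injEq, true_and, not_or] at this ⊢ <;> grind
  have u₄ : utility (redVal q G) M (p r (s + 4)) ≤ 0 :=
    hM.utility_nonpos hT₄ h₄ fun y hy _ => by
      by_contra! hpos
      have hyI := hI₄ y hy
      have hy₃ : y ≠ p r (s + 3) := by rintro rfl; exact h₃₄ hy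
      rcases eq_of_redVal_p_pos hpos with rfl | rfl | rfl
        <;> simp only [mem_insert, mem_singleton, p.injEq, true_and, not_or, ne_eq] at hyI hy₃
        <;> grind
  linarith [utility_p_add_four_pos hst r s u₂ u₃]

lemma exists_consecutive_mem_and_mates (hM : IsMatching univ M) (hcover : ∀ x, ∃ T ∈ M, x ∈ T)
    (hst : IsStable univ (redVal q G) M) (r : Fin (6 * q)) :
    ∃ s, ({p r s, p r (s + 1), p r (s + 2)} : Finset (Agent q)) ∈ M ∧
      ∃ T ∈ M, p r (s + 3) ∈ T ∧ p r (s + 4) ∈ T := by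
  obtain ⟨T, hT, hsub⟩ := exists_subset_gadget hM hcover hst r
  obtain ⟨s, rfl | rfl⟩ := exists_eq_of_subset_gadget hsub (hM.card_eq_three hT)
  · exact ⟨s, hT, exists_mem_mem_of_consecutive_mem hM hcover hst hT⟩
  · exact (gap_triple_notMem hM hcover hst r s hT).elim

lemma exists_triple_p_p_not_p (hM : IsMatching univ M) (hcover : ∀ x, ∃ T ∈ M, x ∈ T)
    (hst : IsStable univ (redVal q G) M) (r : Fin (6 * q)) :
    ∃ u v y, ({p r u, p r v, y} : Finset (Agent q)) ∈ M ∧ ∀ r' t, y ≠ p r' t := by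
  choose s hI T hT h₃ h₄ using exists_consecutive_mem_and_mates hM hcover hst
  obtain ⟨y, hy₃, hy₄, hTeq⟩ :=
    exists_eq_insert_insert_of_card_eq_three (hM.card_eq_three (hT r)) (h₃ r) (h₄ r) (by simp)
  refine ⟨_, _, y, hTeq ▸ hT r, ?_⟩
  rintro r' t rfl
  have hyT : p r' t ∈ T r := by simp [hTeq]
  by_cases hI' : p r' t ∈ ({p r' (s r'), p r' (s r' + 1), p r' (s r' + 2)} : Finset (Agent q))
  · -- then `T r` is the internal triple of gadget `r'`, which has no room for `p r (s r + 3)`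
    have h := hM.eq_of_mem (hT r) (hI r') hyT hI' ▸ h₃ r
    simp only [mem_insert, mem_singleton, p.injEq] at h
    grind
  · have ht : t = s r' + 3 ∨ t = s r' + 4 := by
      simp only [mem_insert, mem_singleton, p.injEq, true_and, not_or] at hI'
      grind
    -- then `T r` is the mate triple of gadget `r'`, which has no room for both mates of `r'`
    have hTT : T r = T r' :=
      hM.eq_of_mem (hT r) (hT r') hyT (by rcases ht with rfl | rfl; exacts [h₃ r', h₄ r'])
    have h₃' := hTT ▸ h₃ r'
    have h₄' := hTT ▸ h₄ r'
    simp only [hTeq, mem_insert, mem_singleton, p.injEq] at h₃' h₄' hy₃ hy₄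
    grind

lemma utility_a_le_one (hM : IsMatching univ M) (hcover : ∀ x, ∃ T ∈ M, x ∈ T) {i : Fin (3 * q)}
    (hTi : ({a i 0, a i 1, b i} : Finset (Agent q)) ∉ M) (s : Fin 2) :
    utility (redVal q G) M (a i s) ≤ 1 := by
  obtain ⟨T, hT, hx⟩ := hcover (a i s)
  by_contra! h2
  have hsub : T ⊆ {a i 0, a i 1, b i} := fun y hy => by
    obtain rfl | hne := eq_or_ne y (a i s)
    · fin_cases s <;> simp
    · exact mem_of_redVal_a_pos (hM.val_pos_of_one_lt_utility hT hx (redVal_le_one _) h2 hy hne)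
  exact hTi (eq_of_subset_of_card_le hsub (hM.card_eq_three hT ▸ card_le_three) ▸ hT)

lemma two_le_utility_b (hM : IsMatching univ M) (hcover : ∀ x, ∃ T ∈ M, x ∈ T)
    (hst : IsStable univ (redVal q G) M) {i : Fin (3 * q)}
    (hTi : ({a i 0, a i 1, b i} : Finset (Agent q)) ∉ M) :
    2 ≤ utility (redVal q G) M (b i) := by
  have h₀ := utility_a_le_one (G := G) hM hcover hTi 0
  have h₁ := utility_a_le_one (G := G) hM hcover hTi 1
  have := hst.le_utility (x := b i) (y := a i 0) (z := a i 1) (by simp) (by simp) (by simp)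
    (by grind [redVal]) (by grind [redVal])
  grind [redVal]

lemma triple_p_p_b_notMem (hM : IsMatching univ M) (hcover : ∀ x, ∃ T ∈ M, x ∈ T)
    (hst : IsStable univ (redVal q G) M) (r : Fin (6 * q)) (u v : Fin 5) (i : Fin (3 * q)) :
    ({p r u, p r v, b i} : Finset (Agent q)) ∉ M := by
  intro hT
  have hTi : ({a i 0, a i 1, b i} : Finset (Agent q)) ∉ M := fun hTi =>
    hM.notMem_of_mem_of_notMem (x := p r u) (y := b i) hT hTi (by simp) (by simp) (by simp)
      (by simp)
  have hu : utility (redVal q G) M (b i) ≤ 0 := hM.utility_nonpos hT (by simp) fun y hy _ => by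
    simp only [mem_insert, mem_singleton] at hy
    rcases hy with rfl | rfl | rfl <;> simp [redVal]
  linarith [two_le_utility_b hM hcover hst hTi]

lemma exists_triple_p_p_a (hM : IsMatching univ M) (hcover : ∀ x, ∃ T ∈ M, x ∈ T)
    (hst : IsStable univ (redVal q G) M) (r : Fin (6 * q)) :
    ∃ i s u v, ({p r u, p r v, a i s} : Finset (Agent q)) ∈ M := by
  obtain ⟨u, v, y, hT, hy⟩ := exists_triple_p_p_not_p hM hcover hst r
  cases y with
  | a i s => exact ⟨i, s, u, v, hT⟩
  | b i => exact (triple_p_p_b_notMem hM hcover hst r u v i hT).elim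
  | p r' t => exact (hy r' t rfl).elim

lemma exists_triple_p_p_of_a (hM : IsMatching univ M) (hcover : ∀ x, ∃ T ∈ M, x ∈ T)
    (hst : IsStable univ (redVal q G) M) (i : Fin (3 * q)) (s : Fin 2) :
    ∃ r u v, ({p r u, p r v, a i s} : Finset (Agent q)) ∈ M := by
  choose i' s' u v hT using exists_triple_p_p_a hM hcover hst
  have hinj : Function.Injective fun r => (i' r, s' r) := fun r r' h => by
    simp only [Prod.mk.injEq] at h
    have hTT := hM.eq_of_mem (x := a (i' r) (s' r)) (hT r) (hT r') (by simp)
      (by simp [h.1, h.2])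
    have h := hTT ▸ (mem_insert_self (p r (u r)) {p r (v r), a (i' r) (s' r)})
    simp only [mem_insert, mem_singleton, p.injEq] at h
    grind
  obtain ⟨r, hr⟩ := ((Fintype.bijective_iff_injective_and_card _).2
    ⟨hinj, by simp only [Fintype.card_fin, Fintype.card_prod]; ring⟩).2 (i, s)
  simp only [Prod.mk.injEq] at hr
  exact ⟨r, u r, v r, hr.1 ▸ hr.2 ▸ hT r⟩

lemma exists_adj_of_mem_of_b_mem (hM : IsMatching univ M) (hcover : ∀ x, ∃ T ∈ M, x ∈ T)
    (hst : IsStable univ (redVal q G) M) {T : Finset (Agent q)} (hT : T ∈ M) {i : Fin (3 * q)}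
    (hb : b i ∈ T) {x : Agent q} (hx : x ∈ T) (hxb : x ≠ b i) : ∃ j, x = b j ∧ G.Adj i j := by
  have ha (s : Fin 2) : a i s ∉ T := fun has => by
    obtain ⟨r, u, v, hT'⟩ := exists_triple_p_p_of_a hM hcover hst i s
    have hb' := hM.eq_of_mem hT hT' has (by simp) ▸ hb
    simp at hb'
  have hTi : ({a i 0, a i 1, b i} : Finset (Agent q)) ∉ M := fun hTi =>
    ha 0 (hM.eq_of_mem hTi hT (by simp) hb ▸ by simp)
  have hpos := hM.val_pos_of_one_lt_utility hT hb (redVal_le_one _)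
    (two_le_utility_b hM hcover hst hTi) hx hxb
  obtain ⟨s, rfl⟩ | ⟨j, hij, rfl⟩ := eq_of_redVal_b_pos hpos
  · exact (ha s hx).elim
  · exact ⟨j, rfl, hij⟩

end Reduction

/-- If the instance constructed by the reduction contains a stable matching of cardinality
`|N|/3 = 13q`, then `G` has a partition into triangles. -/
theorem trianglePartition_of_stable_matching
    (q : ℕ) (G : SimpleGraph (Fin (3*q))) [DecidableRel G.Adj]
    (M : Finset (Finset (Agent q)))
    (hM : IsMatching (Finset.univ : Finset (Agent q)) M)
    (hstable : IsStable Finset.univ (redVal q G) M)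
    (hcard : M.card = 13 * q) :
    ∃ X, IsTrianglePartition G X := by
  have hcover := hM.exists_mem_of_card_eq (by rw [hcard, Agent.card_eq]; ring)
  exact hM.exists_trianglePartition b_injective (fun i => hcover (b i))
    fun T hT _ hb _ hx hxb => exists_adj_of_mem_of_b_mem hM hcover hstable hT hb hx hxb
end

section
/- Let (N,V) be a triangle-free instance of 3D-SR-SAS-BIN, let α_i ∈ N, and let M be a stable P-matching in the sub-instance induced on N ∖ {α_i}. If there exist distinct agents α_{l1}, α_{l2} ∈ N ∖ {α_i} with u_{α_{l1}}(M) = u_{α_{l2}}(M) = 0 and val_{α_i}(α_{l1}) = val_{α_i}(α_{l2}) = 1, then M ∪ {{α_i, α_{l1}, α_{l2}}} is a stable P-matching in (N,V). -/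
/-! Adding the triple `{i, l₁, l₂}` gives `i` utility `2`, the largest value binary
preferences allow, and lowers no agent's utility, because all valuations are nonnegative. An
agent of utility `2` cannot be in a blocking triple, so a triple blocking the enlarged matching
avoids `i` and would already block `M` on `N \ {i}`. The new triple keeps the matching a
`P`-matching since, by symmetry, `l₁` and `l₂` value `i` at `1`. -/

open Finset

variable {A : Type*}

section Lemmas

variable [DecidableEq A]

section Utility

variable (val : A → A → ℤ) (M : Finset (Finset A))

theorem utility_insert {T : Finset A} (hT : T ∉ M) (a : A) :
    utility val (insert T M) a =
      (if a ∈ T then ∑ b ∈ T.erase a, val a b else 0) + utility val M a := by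
  unfold utility
  rw [filter_insert]
  split_ifs with ha
  · rw [sum_insert (fun h => hT (mem_filter.mp h).1)]
  · rw [zero_add]

variable {val M}

theorem utility_le_utility_insert {T : Finset A} (hT : T ∉ M)
    (hnn : ∀ a ∈ T, ∀ b ∈ T, a ≠ b → 0 ≤ val a b) (a : A) :
    utility val M a ≤ utility val (insert T M) a := by
  rw [utility_insert val M hT]
  split_ifs with ha
  · have : 0 ≤ ∑ b ∈ T.erase a, val a b := sum_nonneg fun b hb =>
      hnn a ha b (mem_of_mem_erase hb) (ne_of_mem_erase hb).symm
    linarith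
  · rw [zero_add]

theorem sum_le_utility_insert {T s : Finset A} {a : A} (hT : T ∉ M)
    (hnn : ∀ a ∈ T, ∀ b ∈ T, a ≠ b → 0 ≤ val a b) (ha : a ∈ T) (hs : s ⊆ T.erase a)
    (h0 : 0 ≤ utility val M a) :
    ∑ b ∈ s, val a b ≤ utility val (insert T M) a := by
  have hsum : ∑ b ∈ s, val a b ≤ ∑ b ∈ T.erase a, val a b :=
    sum_le_sum_of_subset_of_nonneg hs fun b hb _ =>
      hnn a ha b (mem_of_mem_erase hb) (ne_of_mem_erase hb).symm
  rw [utility_insert val M hT, if_pos ha]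
  linarith

end Utility

theorem BinSym.nonneg {N : Finset A} {val : A → A → ℤ} (h : BinSym N val) {a b : A}
    (ha : a ∈ N) (hb : b ∈ N) (hab : a ≠ b) : 0 ≤ val a b := by
  rcases h.1 a ha b hb hab with h | h <;> omega

theorem BinSym.le_one {N : Finset A} {val : A → A → ℤ} (h : BinSym N val) {a b : A}
    (ha : a ∈ N) (hb : b ∈ N) (hab : a ≠ b) : val a b ≤ 1 := by
  rcases h.1 a ha b hb hab with h | h <;> omega

theorem IsMatching.notMem_of_notMem {N : Finset A} {M : Finset (Finset A)}
    (hM : IsMatching N M) {a : A} (ha : a ∉ N) : ∀ t ∈ M, a ∉ t :=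
  fun t ht hat => ha ((hM.1 t ht).2 hat)

theorem IsMatching.insert {N N' : Finset A} {M : Finset (Finset A)} {T : Finset A}
    (hM : IsMatching N' M) (hN' : N' ⊆ N) (hTcard : T.card = 3) (hTN : T ⊆ N)
    (hdisj : ∀ t ∈ M, Disjoint T t) : IsMatching N (insert T M) := by
  refine ⟨fun t ht => ?_, fun t ht s hs hts => ?_⟩
  · rcases mem_insert.mp ht with rfl | ht
    · exact ⟨hTcard, hTN⟩
    · exact ⟨(hM.1 t ht).1, (hM.1 t ht).2.trans hN'⟩
  · rcases mem_insert.mp ht with htT | ht <;> rcases mem_insert.mp hs with hsT | hs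
    · exact absurd (htT.trans hsT.symm) hts
    · exact htT ▸ hdisj s hs
    · exact hsT ▸ (hdisj t ht).symm
    · exact hM.2 t ht s hs hts

section PMatching

variable {N : Finset A} {val : A → A → ℤ} {M : Finset (Finset A)}

theorem IsPMatching.utility_nonneg (hM : IsPMatching N val M) (a : A) :
    0 ≤ utility val M a := by
  by_cases ha : ∃ t ∈ M, a ∈ t
  · exact (hM.2 a ha).le
  · rw [not_exists] at ha
    simp [utility, filter_false_of_mem fun t ht hat => ha t ⟨ht, hat⟩]

theorem IsPMatching.notMem_of_utility_eq_zero (hM : IsPMatching N val M) {a : A}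
    (ha : utility val M a = 0) : ∀ t ∈ M, a ∉ t :=
  fun t ht hat => (hM.2 a ⟨t, ht, hat⟩).ne' ha

theorem IsPMatching.insert {N' T : Finset A} (hM : IsPMatching N' val M) (hN' : N' ⊆ N)
    (hTcard : T.card = 3) (hTN : T ⊆ N) (hdisj : ∀ t ∈ M, Disjoint T t)
    (hnn : ∀ a ∈ T, ∀ b ∈ T, a ≠ b → 0 ≤ val a b)
    (hpos : ∀ a ∈ T, ∃ c ∈ T, c ≠ a ∧ 0 < val a c) :
    IsPMatching N val (insert T M) := by
  have hTM : T ∉ M := fun hT =>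
    (card_pos.mp (by omega)).ne_empty (disjoint_self.mp (hdisj T hT))
  refine ⟨hM.1.insert hN' hTcard hTN hdisj, fun a ha => ?_⟩
  by_cases haT : a ∈ T
  · obtain ⟨c, hcT, hca, hc⟩ := hpos a haT
    calc 0 < val a c := hc
      _ = ∑ b ∈ {c}, val a b := (sum_singleton _ _).symm
      _ ≤ _ := sum_le_utility_insert hTM hnn haT
        (singleton_subset_iff.mpr (mem_erase.mpr ⟨hca, hcT⟩)) (hM.utility_nonneg a)
  · obtain ⟨t, ht, hat⟩ := ha
    have ht' : t ∈ M := (mem_insert.mp ht).resolve_left fun h => haT (h ▸ hat)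
    rw [utility_insert val M hTM, if_neg haT, zero_add]
    exact hM.2 a ⟨t, ht', hat⟩

end PMatching

section Stability

variable {N : Finset A} {val : A → A → ℤ} {M M' : Finset (Finset A)} {x y z : A}

theorem Blocks.utility_lt_two (hbs : BinSym N val) (h : Blocks N val M x y z) :
    utility val M x < 2 ∧ utility val M y < 2 ∧ utility val M z < 2 := by
  obtain ⟨hx, hy, hz, hxy, hxz, hyz, hux, huy, huz⟩ := h
  have := hbs.le_one hx hy hxy
  have := hbs.le_one hx hz hxz
  have := hbs.le_one hy hx hxy.symm
  have := hbs.le_one hy hz hyz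
  have := hbs.le_one hz hx hxz.symm
  have := hbs.le_one hz hy hyz.symm
  omega

theorem Blocks.of_utility_le {N' : Finset A} (h : Blocks N val M' x y z)
    (hle : ∀ a, utility val M a ≤ utility val M' a) (hx : x ∈ N') (hy : y ∈ N')
    (hz : z ∈ N') :
    Blocks N' val M x y z := by
  obtain ⟨-, -, -, hxy, hxz, hyz, hux, huy, huz⟩ := h
  exact ⟨hx, hy, hz, hxy, hxz, hyz, (hle x).trans_lt hux, (hle y).trans_lt huy,
    (hle z).trans_lt huz⟩

theorem IsStable.of_erase {i : A} (hMst : IsStable (N.erase i) val M)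
    (hbs : BinSym N val) (hle : ∀ a, utility val M a ≤ utility val M' a)
    (hi : 2 ≤ utility val M' i) : IsStable N val M' := by
  intro x y z h
  have hmem : ∀ a ∈ N, utility val M' a < 2 → a ∈ N.erase i := fun a ha hua =>
    mem_erase.mpr ⟨fun hai => by rw [hai] at hua; omega, ha⟩
  obtain ⟨hux, huy, huz⟩ := h.utility_lt_two hbs
  exact hMst x y z
    (h.of_utility_le hle (hmem x h.1 hux) (hmem y h.2.1 huy) (hmem z h.2.2.1 huz))

end Stability

end Lemmas

theorem insert_triple_stable_pmatching_general [DecidableEq A]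
    (N : Finset A) (val : A → A → ℤ)
    (hbs : BinSym N val)
    (i : A) (hi : i ∈ N) (M : Finset (Finset A))
    (hM : IsPMatching (N.erase i) val M) (hMst : IsStable (N.erase i) val M)
    (l1 l2 : A) (hl1 : l1 ∈ N.erase i) (hl2 : l2 ∈ N.erase i) (hne : l1 ≠ l2)
    (hu1 : utility val M l1 = 0) (hu2 : utility val M l2 = 0)
    (hv1 : val i l1 = 1) (hv2 : val i l2 = 1) :
    IsPMatching N val (insert ({i, l1, l2} : Finset A) M) ∧
    IsStable N val (insert ({i, l1, l2} : Finset A) M) := by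
  obtain ⟨hl1i, hl1N⟩ := mem_erase.mp hl1
  obtain ⟨hl2i, hl2N⟩ := mem_erase.mp hl2
  set T : Finset A := {i, l1, l2}
  have hTN : T ⊆ N := by simp [T, insert_subset_iff, hi, hl1N, hl2N]
  have hTcard : T.card = 3 := card_eq_three.mpr ⟨i, l1, l2, hl1i.symm, hl2i.symm, hne, rfl⟩
  have hdisj : ∀ t ∈ M, Disjoint T t := fun t ht => by
    simp [T, hM.1.notMem_of_notMem (notMem_erase i N) t ht,
      hM.notMem_of_utility_eq_zero hu1 t ht, hM.notMem_of_utility_eq_zero hu2 t ht]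
  have hTM : T ∉ M := fun hT => hM.1.notMem_of_notMem (notMem_erase i N) T hT (by simp [T])
  have hnn : ∀ a ∈ T, ∀ b ∈ T, a ≠ b → 0 ≤ val a b :=
    fun a ha b hb hab => hbs.nonneg (hTN ha) (hTN hb) hab
  have hpos : ∀ a ∈ T, ∃ c ∈ T, c ≠ a ∧ 0 < val a c := by
    have hvl1 : val l1 i = 1 := (hbs.2 l1 hl1N i hi).trans hv1
    have hvl2 : val l2 i = 1 := (hbs.2 l2 hl2N i hi).trans hv2
    simp only [T, mem_insert, mem_singleton, forall_eq_or_imp, forall_eq]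
    exact ⟨⟨l1, by simp, hl1i, by omega⟩, ⟨i, by simp, hl1i.symm, by omega⟩,
      ⟨i, by simp, hl2i.symm, by omega⟩⟩
  refine ⟨hM.insert (erase_subset i N) hTcard hTN hdisj hnn hpos,
    hMst.of_erase hbs (utility_le_utility_insert hTM hnn) ?_⟩
  calc (2 : ℤ) = ∑ b ∈ {l1, l2}, val i b := by rw [sum_pair hne, hv1, hv2]; rfl
    _ ≤ utility val (insert T M) i :=
      sum_le_utility_insert hTM hnn (by simp [T]) (by simp [T, hl1i, hl2i, insert_subset_iff])
        (hM.utility_nonneg i)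

/-- First branch of algorithm `findStableInTriangleFree`: if `M` is a stable `P`-matching
on `N \ {i}` and there are two distinct agents `l₁, l₂` of utility `0` in `M` with
`val i l₁ = val i l₂ = 1`, then `M ∪ {{i, l₁, l₂}}` is a stable `P`-matching on `N`. -/
theorem insert_triple_stable_pmatching [DecidableEq A]
    (N : Finset A) (val : A → A → ℤ)
    (hbs : BinSym N val) (htf : TriangleFree N val)
    (i : A) (hi : i ∈ N) (M : Finset (Finset A))
    (hM : IsPMatching (N.erase i) val M) (hMst : IsStable (N.erase i) val M)
    (l1 l2 : A) (hl1 : l1 ∈ N.erase i) (hl2 : l2 ∈ N.erase i) (hne : l1 ≠ l2)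
    (hu1 : utility val M l1 = 0) (hu2 : utility val M l2 = 0)
    (hv1 : val i l1 = 1) (hv2 : val i l2 = 1) :
    IsPMatching N val (insert ({i, l1, l2} : Finset A) M) ∧
    IsStable N val (insert ({i, l1, l2} : Finset A) M) :=
  insert_triple_stable_pmatching_general N val hbs i hi M hM hMst l1 l2 hl1 hl2 hne hu1 hu2 hv1 hv2
end

section
/- Let G=(W,E) be a simple undirected graph with |W| = 3q, and let (N,V) be the instance of 3D-SR-SAS-BIN with N = W and val_{w_i}(w_j) = 1 if {w_i,w_j} ∈ E and val_{w_i}(w_j) = 0 otherwise. Then G has a partition into triangles if and only if (N,V) contains a stable matching M with utilitarian welfare u(M) = 2|N|. -/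
open Finset

variable {A : Type*}

/-!
Every agent's utility is at most `2`, so welfare `2|N|` forces every agent to be matched with
utility exactly `2`, i.e. every triple of the matching is a triangle of `G`; conversely a
triangle partition gives every agent the maximal utility `2`, so no triple can block it.
-/

section Matching

variable [DecidableEq A] {N : Finset A} {M : Finset (Finset A)} {val : A → A → ℤ}

lemma utility_eq_zero_of_forall_not_mem {a : A} (ha : ∀ t ∈ M, a ∉ t) :
    utility val M a = 0 := by
  rw [utility, filter_eq_empty_iff.2 ha, sum_empty]

lemma IsStable.of_utility_eq_two (hval : ∀ a b, val a b ≤ 1)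
    (hu : ∀ a ∈ N, utility val M a = 2) : IsStable N val M := by
  rintro x y z ⟨hx, -, -, -, -, -, hblock, -⟩
  have := hval x y
  have := hval x z
  rw [hu x hx] at hblock
  omega

namespace IsMatching

lemma filter_mem_eq_singleton_s14 (hM : IsMatching N M) {t : Finset A} (ht : t ∈ M) {a : A}
    (ha : a ∈ t) : M.filter (a ∈ ·) = {t} := by
  ext s
  simp only [mem_filter, mem_singleton]
  refine ⟨fun ⟨hs, has⟩ => ?_, by rintro rfl; exact ⟨ht, ha⟩⟩
  by_contra hne
  exact disjoint_left.1 (hM.2 s hs t ht hne) has ha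

lemma utility_eq_sum_s14 (hM : IsMatching N M) {t : Finset A} (ht : t ∈ M) {a : A} (ha : a ∈ t) :
    utility val M a = ∑ b ∈ t.erase a, val a b := by
  rw [utility, hM.filter_mem_eq_singleton_s14 ht ha, sum_singleton]

lemma card_erase_eq_two (hM : IsMatching N M) {t : Finset A} (ht : t ∈ M) {a : A}
    (ha : a ∈ t) : (t.erase a).card = 2 := by
  rw [card_erase_of_mem ha, (hM.1 t ht).1]

lemma utility_le_two (hM : IsMatching N M) (hval : ∀ a b, val a b ≤ 1) (a : A) :
    utility val M a ≤ 2 := by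
  by_cases h : ∃ t ∈ M, a ∈ t
  · obtain ⟨t, ht, ha⟩ := h
    calc utility val M a = ∑ b ∈ t.erase a, val a b := hM.utility_eq_sum_s14 ht ha
      _ ≤ ∑ _b ∈ t.erase a, 1 := sum_le_sum fun b _ => hval a b
      _ = 2 := by simp [hM.card_erase_eq_two ht ha]
  · push Not at h
    rw [utility_eq_zero_of_forall_not_mem h]
    norm_num

lemma utility_eq_two_of_sum_eq (hM : IsMatching N M) (hval : ∀ a b, val a b ≤ 1)
    (hsum : ∑ a ∈ N, utility val M a = 2 * (N.card : ℤ)) :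
    ∀ a ∈ N, utility val M a = 2 := by
  have hle : ∀ a ∈ N, utility val M a ≤ 2 := fun a _ => hM.utility_le_two hval a
  refine (sum_eq_sum_iff_of_le hle).1 ?_
  rw [hsum, sum_const, nsmul_eq_mul, mul_comm]

lemma val_eq_one_of_utility_eq_two (hM : IsMatching N M) (hval : ∀ a b, val a b ≤ 1)
    {t : Finset A} (ht : t ∈ M) {a b : A} (ha : a ∈ t) (hb : b ∈ t) (hab : a ≠ b)
    (hu : utility val M a = 2) : val a b = 1 := by
  have hsum : ∑ c ∈ t.erase a, val a c = ∑ _c ∈ t.erase a, 1 := by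
    simp [← hM.utility_eq_sum_s14 ht ha, hu, hM.card_erase_eq_two ht ha]
  exact (sum_eq_sum_iff_of_le fun c _ => hval a c).1 hsum b (mem_erase.2 ⟨hab.symm, hb⟩)

end IsMatching

end Matching

section Graph

variable {n : ℕ} {G : SimpleGraph (Fin n)} {X : Finset (Finset (Fin n))}

lemma ite_adj_le_one [DecidableRel G.Adj] (a b : Fin n) :
    (if G.Adj a b then 1 else 0 : ℤ) ≤ 1 := by
  split_ifs <;> norm_num

lemma IsTrianglePartition.isMatching (hX : IsTrianglePartition G X) : IsMatching univ X :=
  ⟨fun t ht => ⟨(hX.1 t ht).1, subset_univ t⟩, hX.2.1⟩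

lemma IsTrianglePartition.utility_eq_two [DecidableRel G.Adj] (hX : IsTrianglePartition G X)
    (a : Fin n) :
    utility (fun a b => if G.Adj a b then 1 else 0) X a = 2 := by
  obtain ⟨t, ht, ha⟩ := hX.2.2 a
  have hone : ∀ b ∈ t.erase a, (if G.Adj a b then 1 else 0 : ℤ) = 1 := fun b hb =>
    if_pos ((hX.1 t ht).2 a ha b (mem_of_mem_erase hb) (ne_of_mem_erase hb).symm)
  rw [hX.isMatching.utility_eq_sum_s14 ht ha, sum_congr rfl hone]
  simp [hX.isMatching.card_erase_eq_two ht ha]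

lemma IsMatching.isTrianglePartition [DecidableRel G.Adj] (hM : IsMatching univ X)
    (hu : ∀ a, utility (fun a b => if G.Adj a b then 1 else 0) X a = 2) :
    IsTrianglePartition G X := by
  refine ⟨fun t ht => ⟨(hM.1 t ht).1, fun u hu' v hv huv => ?_⟩, hM.2, fun v => ?_⟩
  · have := hM.val_eq_one_of_utility_eq_two ite_adj_le_one ht hu' hv huv (hu u)
    by_contra hadj
    simp [hadj] at this
  · by_contra h
    push Not at h
    have := hu v
    rw [utility_eq_zero_of_forall_not_mem h] at this
    norm_num at this

end Graph

/-- `G` (on `3q` vertices) has a partition into triangles iff the binary symmetric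
instance whose valuations are the adjacency indicator of `G` contains a stable matching
with utilitarian welfare `2|N|`. -/
theorem trianglePartition_iff_stable_matching_max_welfare
    (q : ℕ) (G : SimpleGraph (Fin (3*q))) [DecidableRel G.Adj] :
    (∃ X, IsTrianglePartition G X) ↔
    ∃ M : Finset (Finset (Fin (3*q))),
      IsMatching (Finset.univ : Finset (Fin (3*q))) M ∧
      IsStable Finset.univ (fun a b => if G.Adj a b then 1 else 0) M ∧
      ∑ a : Fin (3*q), utility (fun a b => if G.Adj a b then 1 else 0) M a
        = 2 * (3 * q : ℤ) := by
  constructor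
  · rintro ⟨X, hX⟩
    refine ⟨X, hX.isMatching,
      IsStable.of_utility_eq_two ite_adj_le_one fun a _ => hX.utility_eq_two a, ?_⟩
    simp [hX.utility_eq_two, mul_comm]
  · rintro ⟨M, hM, -, hsum⟩
    refine ⟨M, hM.isTrianglePartition fun a => ?_⟩
    refine hM.utility_eq_two_of_sum_eq ite_adj_le_one ?_ a (mem_univ a)
    simpa using hsum
end
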